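/- arXiv:2507.15805 — 2 statements merged into one kernel-verified Lean document; each statement's English description precedes it below -/
import Mathlib

section
/- For the enzyme dynamics system, the total enzyme quantity is conserved: for every t ∈ ℝ, C1(t) + E(t) = C1(0) + E(0). -/
theorem add_eq_add_of_hasDerivAt_neg {F : Type*} [NormedAddCommGroup F] [NormedSpace ℝ F]
    {f g f' : ℝ → F} (hf : ∀ t, HasDerivAt f (f' t) t) (hg : ∀ t, HasDerivAt g (-f' t) t)
    (x y : ℝ) : f x + g x = f y + g y := by
  have hsum : ∀ t, HasDerivAt (f + g) 0 t := fun t => by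
    simpa using (hf t).add (hg t)
  exact is_const_of_deriv_eq_zero (fun t => (hsum t).differentiableAt) (fun t => (hsum t).deriv) x y

theorem enzyme_total_enzyme_conserved_general
    (k1 km1 k2 : ℝ) (C1 E S : ℝ → ℝ)
    (hC1 : ∀ t : ℝ, HasDerivAt C1 (k1 * S t * E t - (km1 + k2) * C1 t) t)
    (hE : ∀ t : ℝ, HasDerivAt E (-(k1 * S t * E t) + (km1 + k2) * C1 t) t) :
    ∀ t : ℝ, C1 t + E t = C1 0 + E 0 := by
  intro t
  exact add_eq_add_of_hasDerivAt_neg hC1 (fun τ => (hE τ).congr_deriv (by ring)) t 0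

/-- For the enzyme dynamics system, the total enzyme quantity is conserved:
for every `t : ℝ`, `C1 t + E t = C1 0 + E 0`. -/
theorem enzyme_total_enzyme_conserved
    (k1 km1 k2 : ℝ) (C1 E S P : ℝ → ℝ)
    (hC1 : ∀ t : ℝ, HasDerivAt C1 (k1 * S t * E t - (km1 + k2) * C1 t) t)
    (hE : ∀ t : ℝ, HasDerivAt E (-(k1 * S t * E t) + (km1 + k2) * C1 t) t)
    (hS : ∀ t : ℝ, HasDerivAt S (-(k1 * S t * E t) + km1 * C1 t) t)
    (hP : ∀ t : ℝ, HasDerivAt P (k2 * C1 t) t) :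
    ∀ t : ℝ, C1 t + E t = C1 0 + E 0 :=
  enzyme_total_enzyme_conserved_general k1 km1 k2 C1 E S hC1 hE
end

section
/- For the enzyme dynamics system, the total substrate quantity is conserved: for every t ∈ ℝ, C1(t) + S(t) + P(t) = C1(0) + S(0) + P(0). -/
theorem enzyme_total_substrate_conserved_general
    (k1 km1 k2 : ℝ) (C1 E S P : ℝ → ℝ)
    (hC1 : ∀ t : ℝ, HasDerivAt C1 (k1 * S t * E t - (km1 + k2) * C1 t) t)
    (hS : ∀ t : ℝ, HasDerivAt S (-(k1 * S t * E t) + km1 * C1 t) t)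
    (hP : ∀ t : ℝ, HasDerivAt P (k2 * C1 t) t) :
    ∀ t : ℝ, C1 t + S t + P t = C1 0 + S 0 + P 0 := by
  have total_deriv_zero : ∀ t, HasDerivAt (fun t => C1 t + S t + P t) 0 t := fun t =>
    (((hC1 t).add (hS t)).add (hP t)).congr_deriv (by ring)
  exact fun t => is_const_of_deriv_eq_zero (fun x => (total_deriv_zero x).differentiableAt)
    (fun x => (total_deriv_zero x).deriv) t 0

/-- For the enzyme dynamics system, the total substrate quantity is conserved:
for every `t : ℝ`, `C1 t + S t + P t = C1 0 + S 0 + P 0`. -/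
theorem enzyme_total_substrate_conserved
    (k1 km1 k2 : ℝ) (C1 E S P : ℝ → ℝ)
    (hC1 : ∀ t : ℝ, HasDerivAt C1 (k1 * S t * E t - (km1 + k2) * C1 t) t)
    (hE : ∀ t : ℝ, HasDerivAt E (-(k1 * S t * E t) + (km1 + k2) * C1 t) t)
    (hS : ∀ t : ℝ, HasDerivAt S (-(k1 * S t * E t) + km1 * C1 t) t)
    (hP : ∀ t : ℝ, HasDerivAt P (k2 * C1 t) t) :
    ∀ t : ℝ, C1 t + S t + P t = C1 0 + S 0 + P 0 :=
  enzyme_total_substrate_conserved_general k1 km1 k2 C1 E S P hC1 hS hP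
end
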